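/- arXiv:2002.09006 — 2 statements merged into one kernel-verified Lean document; each statement's English description precedes it below -/
import Mathlib

section
/- Let p ∈ 𝔽₂[x] be of degree m ≥ 1 and let w ≥ m. Then the one-dimensional point family (ν_w(h))_{h ∈ H} is fully stratified: for every d with 0 ≤ d ≤ m and every integer r with 0 ≤ r < 2^d, exactly 2^{m−d} polynomials h ∈ H satisfy r/2^d ≤ ν_w(h) < (r+1)/2^d. In particular the family is a (0, m, 1)-net in base 2 (the t-value is zero for dimension s = 1 for every such p). -/
open Polynomial

/-- `laurentCoeff p h j` is the coefficient `c_j(h)` of `x^{-j-1}` in the Laurent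
expansion of `h(x)/p(x)` at infinity, computed as the `y^j`-coefficient of the
power series `(reflect (m-1) h) * (reverse p)⁻¹` where `m = deg p`. -/
noncomputable def laurentCoeff (p h : Polynomial (ZMod 2)) (j : ℕ) : ZMod 2 :=
  PowerSeries.coeff j
    ((↑(h.reflect (p.natDegree - 1)) : PowerSeries (ZMod 2)) *
      (↑p.reverse : PowerSeries (ZMod 2))⁻¹)

/-- `ν_w(h) = Σ_{j<w} c_j(h) 2^{-j-1} ∈ [0,1)`. -/
noncomputable def nuW (w : ℕ) (p h : Polynomial (ZMod 2)) : ℝ :=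
  ∑ j ∈ Finset.range w, ((laurentCoeff p h j).val : ℝ) / 2 ^ (j + 1)

/-! ### Auxiliary lemmas -/

lemma laurentCoeff_add (p a b : Polynomial (ZMod 2)) (j : ℕ) :
    laurentCoeff p (a + b) j = laurentCoeff p a j + laurentCoeff p b j := by
  unfold laurentCoeff
  rw [reflect_add, Polynomial.coe_add, add_mul, map_add]

lemma laurentCoeff_zero (p : Polynomial (ZMod 2)) (j : ℕ) :
    laurentCoeff p 0 j = 0 := by
  unfold laurentCoeff
  rw [reflect_zero, Polynomial.coe_zero, zero_mul, map_zero]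

lemma eq_zero_of_laurent (m : ℕ) (hm : 1 ≤ m) (p h : Polynomial (ZMod 2))
    (hp : p.degree = (m : WithBot ℕ)) (hdeg : h.degree < (m : WithBot ℕ))
    (hc : ∀ j < m, laurentCoeff p h j = 0) : h = 0 := by
  have hpd : p.natDegree = m := natDegree_eq_of_degree_eq_some hp
  have hp0 : p ≠ 0 := by
    intro h0
    rw [h0, degree_zero] at hp
    exact absurd hp (by simp)
  have hu : (PowerSeries.constantCoeff) (↑p.reverse : PowerSeries (ZMod 2)) ≠ 0 := by
    rw [← PowerSeries.coeff_zero_eq_constantCoeff, Polynomial.coeff_coe, coeff_zero_reverse]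
    exact leadingCoeff_ne_zero.mpr hp0
  set G : PowerSeries (ZMod 2) := (↑(h.reflect (p.natDegree - 1)) : PowerSeries (ZMod 2)) with hG
  have hdvd : (PowerSeries.X : PowerSeries (ZMod 2)) ^ m ∣
      G * (↑p.reverse : PowerSeries (ZMod 2))⁻¹ :=
    PowerSeries.X_pow_dvd_iff.mpr (fun j hj => hc j hj)
  have hGeq : G = (G * (↑p.reverse : PowerSeries (ZMod 2))⁻¹) * ↑p.reverse := by
    rw [mul_assoc, PowerSeries.inv_mul_cancel _ hu, mul_one]
  have hdvdG : (PowerSeries.X : PowerSeries (ZMod 2)) ^ m ∣ G := hGeq ▸ hdvd.mul_right _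
  have hcoeffG : ∀ j < m, (h.reflect (m - 1)).coeff j = 0 := by
    intro j hj
    have := PowerSeries.X_pow_dvd_iff.mp hdvdG j hj
    rwa [hG, hpd, Polynomial.coeff_coe] at this
  ext i
  rcases lt_or_ge i m with hi | hi
  · have h1 : h.coeff i = (h.reflect (m - 1)).coeff (m - 1 - i) := by
      rw [coeff_reflect, revAt_le (by omega)]
      congr 1
      omega
    rw [h1, hcoeffG _ (by omega), coeff_zero]
  · rw [coeff_eq_zero_of_degree_lt (lt_of_lt_of_le hdeg (by exact_mod_cast hi)), coeff_zero]

/-- The additive map sending `h` (of degree `< m`) to its first `d` Laurent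
coefficients. -/
noncomputable def coeffMap (p : Polynomial (ZMod 2)) (m d : ℕ) :
    (Polynomial.degreeLT (ZMod 2) m) →+ (Fin d → ZMod 2) where
  toFun h := fun j => laurentCoeff p h j
  map_zero' := by funext j; exact laurentCoeff_zero p j
  map_add' a b := by funext j; exact laurentCoeff_add p a b j

lemma card_degreeLT (m : ℕ) :
    Nat.card (Polynomial.degreeLT (ZMod 2) m) = 2 ^ m := by
  rw [Nat.card_congr (Polynomial.degreeLTEquiv (ZMod 2) m).toEquiv]
  simp [Nat.card_eq_fintype_card]

lemma coeffMap_surjective (m : ℕ) (hm : 1 ≤ m) (p : Polynomial (ZMod 2))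
    (hp : p.degree = (m : WithBot ℕ)) (d : ℕ) (hd : d ≤ m) :
    Function.Surjective (coeffMap p m d) := by
  haveI : Finite (Polynomial.degreeLT (ZMod 2) m) :=
    Finite.of_equiv _ (Polynomial.degreeLTEquiv (ZMod 2) m).toEquiv.symm
  have hinj : Function.Injective (coeffMap p m m) := by
    rw [injective_iff_map_eq_zero]
    intro x hx
    have : (x : Polynomial (ZMod 2)) = 0 := by
      apply eq_zero_of_laurent m hm p _ hp (Polynomial.mem_degreeLT.mp x.2)
      intro j hj
      exact congrFun hx ⟨j, hj⟩
    exact Subtype.ext this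
  have hbij : Function.Bijective (coeffMap p m m) := by
    rw [Nat.bijective_iff_injective_and_card]
    refine ⟨hinj, ?_⟩
    rw [card_degreeLT]
    simp [Nat.card_eq_fintype_card]
  intro t
  obtain ⟨x, hx⟩ := hbij.2 (fun i : Fin m => if h : (i : ℕ) < d then t ⟨i, h⟩ else 0)
  refine ⟨x, ?_⟩
  funext j
  have := congrFun hx ⟨(j : ℕ), lt_of_lt_of_le j.2 hd⟩
  simpa [coeffMap, j.2] using this

lemma card_fiber {A B : Type*} [AddCommGroup A] [AddCommGroup B] [Finite A] [Finite B]
    (f : A →+ B) (hf : Function.Surjective f) (b : B) :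
    Nat.card (f ⁻¹' {b}) * Nat.card B = Nat.card A := by
  obtain ⟨a₀, ha₀⟩ := hf b
  have e1 : (f ⁻¹' {b}) ≃ (f.ker : Set A) :=
    { toFun := fun x => ⟨x.1 - a₀, by
        have hx : f x.1 = b := x.2
        simp [AddMonoidHom.mem_ker, map_sub, hx, ha₀]⟩
      invFun := fun y => ⟨y.1 + a₀, by
        have hy : f y.1 = 0 := AddMonoidHom.mem_ker.mp y.2
        simp [Set.mem_preimage, map_add, hy, ha₀]⟩
      left_inv := fun x => by simp
      right_inv := fun y => by simp }
  rw [Nat.card_congr e1, SetLike.coe_sort_coe]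
  have h2 := AddSubgroup.card_eq_card_quotient_mul_card_addSubgroup f.ker
  rw [Nat.card_congr (QuotientAddGroup.quotientKerEquivOfSurjective f hf).toEquiv] at h2
  rw [h2, mul_comm]

/-- The natural number with binary digits `v 0, v 1, …, v (d-1)` (most
significant first). -/
noncomputable def bitSum (d : ℕ) (v : Fin d → ZMod 2) : ℕ :=
  ∑ j : Fin d, (v j).val * 2 ^ (d - 1 - (j : ℕ))

lemma bitSum_eq (d : ℕ) (v : Fin d → ZMod 2) :
    bitSum d v = (finFunctionFinEquiv
      (fun i : Fin d => (⟨(v i.rev).val, ZMod.val_lt _⟩ : Fin 2))).val := by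
  rw [finFunctionFinEquiv_apply]
  unfold bitSum
  rw [← Equiv.sum_comp (Fin.revPerm) (fun j : Fin d => (v j).val * 2 ^ (d - 1 - (j : ℕ)))]
  apply Finset.sum_congr rfl
  intro i _
  simp only [Fin.revPerm_apply, Fin.rev_rev, Fin.val_rev]
  have hi : (i : ℕ) < d := i.is_lt
  congr 2
  omega

lemma exists_bits (d r : ℕ) (hr : r < 2 ^ d) :
    ∃ t : Fin d → ZMod 2, ∀ v : Fin d → ZMod 2, (bitSum d v = r ↔ v = t) := by
  set f0 : Fin d → Fin 2 := finFunctionFinEquiv.symm ⟨r, hr⟩ with hf0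
  refine ⟨fun j => ((f0 j.rev : Fin 2) : ℕ), fun v => ?_⟩
  have ht : bitSum d (fun j => (((f0 j.rev : Fin 2) : ℕ) : ZMod 2)) = r := by
    rw [bitSum_eq]
    have : (fun i : Fin d =>
        (⟨ZMod.val (((f0 i.rev.rev : Fin 2) : ℕ) : ZMod 2), ZMod.val_lt _⟩ : Fin 2)) = f0 := by
      funext i
      apply Fin.ext
      simp only [Fin.rev_rev]
      rw [ZMod.val_natCast, Nat.mod_eq_of_lt (f0 i).2]
    simp only [Fin.rev_rev] at this ⊢
    rw [this, hf0, Equiv.apply_symm_apply]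
  constructor
  · intro hv
    have hinj : ∀ a b : Fin d → ZMod 2, bitSum d a = bitSum d b → a = b := by
      intro a b hab
      rw [bitSum_eq, bitSum_eq] at hab
      have h1 := finFunctionFinEquiv.injective (Fin.val_injective hab)
      funext j
      have := congrFun h1 j.rev
      simp only [Fin.rev_rev, Fin.mk.injEq] at this
      exact ZMod.val_injective _ this
    exact hinj _ _ (hv.trans ht.symm)
  · rintro rfl
    exact ht

lemma interval_iff (w d : ℕ) (hdw : d ≤ w) (p h : Polynomial (ZMod 2)) (r : ℕ) :
    ((r : ℝ) / 2 ^ d ≤ nuW w p h ∧ nuW w p h < ((r : ℝ) + 1) / 2 ^ d) ↔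
    bitSum d (fun j : Fin d => laurentCoeff p h (j : ℕ)) = r := by
  have hpow : (0:ℝ) < 2 ^ d := by positivity
  have hNr : ((bitSum d fun j : Fin d => laurentCoeff p h (j : ℕ)) : ℝ) / 2 ^ d
      = ∑ j ∈ Finset.range d, ((laurentCoeff p h j).val : ℝ) / 2 ^ (j + 1) := by
    unfold bitSum
    push_cast
    rw [Fin.sum_univ_eq_sum_range (fun j => ((laurentCoeff p h j).val : ℝ) * 2 ^ (d - 1 - j)),
      Finset.sum_div]
    apply Finset.sum_congr rfl
    intro j hj
    have hjd : j < d := Finset.mem_range.mp hj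
    rw [div_eq_div_iff (by positivity) (by positivity), mul_assoc, ← pow_add]
    congr 2
    omega
  set T := ∑ j ∈ Finset.Ico d w, ((laurentCoeff p h j).val : ℝ) / 2 ^ (j + 1) with hT
  have hT0 : (0:ℝ) ≤ T := Finset.sum_nonneg (fun j _ => by positivity)
  have key : ∀ n, d ≤ n → ∑ j ∈ Finset.Ico d n, (1:ℝ) / 2 ^ (j + 1) = 1 / 2 ^ d - 1 / 2 ^ n := by
    intro n hn
    induction n with
    | zero => have hd0 : d = 0 := by omega
              subst hd0; simp
    | succ k ih =>
      rcases Nat.lt_or_ge d (k+1) with hdk | hdk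
      · have hdk' : d ≤ k := by omega
        rw [Finset.sum_Ico_succ_top hdk', ih hdk', pow_succ]
        ring
      · have hd : d = k + 1 := by omega
        subst hd; simp
  have hT1 : T < 1 / 2 ^ d := by
    have hle : T ≤ ∑ j ∈ Finset.Ico d w, (1:ℝ) / 2 ^ (j + 1) := by
      apply Finset.sum_le_sum
      intro j _
      apply div_le_div_of_nonneg_right ?_ (by positivity)
      · have := ZMod.val_lt (laurentCoeff p h j)
        have h1 : (laurentCoeff p h j).val ≤ 1 := by omega
        exact_mod_cast h1
    have hpw : (0:ℝ) < 1 / 2 ^ w := by positivity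
    calc T ≤ 1 / 2 ^ d - 1 / 2 ^ w := by rw [← key w hdw]; exact hle
    _ < 1 / 2 ^ d := by linarith
  have hsplit : nuW w p h
      = ((bitSum d fun j : Fin d => laurentCoeff p h (j : ℕ)) : ℝ) / 2 ^ d + T := by
    unfold nuW
    rw [Finset.range_eq_Ico, ← Finset.sum_Ico_consecutive _ (Nat.zero_le d) hdw,
      ← Finset.range_eq_Ico, ← hNr, hT]
  set N := bitSum d fun j : Fin d => laurentCoeff p h (j : ℕ) with hN
  constructor
  · rintro ⟨h1, h2⟩
    rw [hsplit] at h1 h2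
    have e1 : (N:ℝ) / 2 ^ d < ((r:ℝ) + 1) / 2 ^ d := by linarith
    have e2 : (r:ℝ) / 2 ^ d < ((N:ℝ) + 1) / 2 ^ d := by
      calc (r:ℝ) / 2 ^ d ≤ (N:ℝ) / 2 ^ d + T := h1
      _ < (N:ℝ) / 2 ^ d + 1 / 2 ^ d := by linarith
      _ = ((N:ℝ) + 1) / 2 ^ d := by rw [← add_div]
    have e1' : (N:ℝ) < (r:ℝ) + 1 := by
      have := (div_lt_div_iff₀ hpow hpow).mp e1
      exact lt_of_mul_lt_mul_right this (le_of_lt hpow)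
    have e2' : (r:ℝ) < (N:ℝ) + 1 := by
      have := (div_lt_div_iff₀ hpow hpow).mp e2
      exact lt_of_mul_lt_mul_right this (le_of_lt hpow)
    have f1 : N < r + 1 := by exact_mod_cast e1'
    have f2 : r < N + 1 := by exact_mod_cast e2'
    omega
  · rintro rfl
    rw [hsplit]
    constructor
    · linarith
    · calc (N:ℝ) / 2 ^ d + T < (N:ℝ) / 2 ^ d + 1 / 2 ^ d := by linarith
      _ = ((N:ℝ) + 1) / 2 ^ d := by rw [← add_div]

/-- For any `p` of degree `m ≥ 1` and `w ≥ m`, the one-dimensional family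
`h ↦ ν_w(h)` over polynomials `h` of degree `< m` is fully stratified: every
dyadic interval `[r/2^d, (r+1)/2^d)` with `d ≤ m` contains exactly `2^(m-d)` of
the points.  In particular the family is a `(0, m, 1)`-net in base `2`. -/
theorem nuW_stratified (m w : ℕ) (hm : 1 ≤ m) (hw : m ≤ w)
    (p : Polynomial (ZMod 2)) (hp : p.degree = (m : WithBot ℕ)) :
    ∀ d : ℕ, d ≤ m → ∀ r : ℕ, r < 2 ^ d →
      Set.ncard {h : Polynomial (ZMod 2) | h.degree < (m : WithBot ℕ) ∧
        (r : ℝ) / 2 ^ d ≤ nuW w p h ∧ nuW w p h < ((r : ℝ) + 1) / 2 ^ d} =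
        2 ^ (m - d) := by
  intro d hd r hr
  have hdw : d ≤ w := le_trans hd hw
  obtain ⟨t, ht⟩ := exists_bits d r hr
  haveI : Finite (Polynomial.degreeLT (ZMod 2) m) :=
    Finite.of_equiv _ (Polynomial.degreeLTEquiv (ZMod 2) m).toEquiv.symm
  have hsurj := coeffMap_surjective m hm p hp d hd
  have hset : {h : Polynomial (ZMod 2) | h.degree < (m : WithBot ℕ) ∧
      (r : ℝ) / 2 ^ d ≤ nuW w p h ∧ nuW w p h < ((r : ℝ) + 1) / 2 ^ d}
      = Subtype.val '' ((coeffMap p m d) ⁻¹' {t}) := by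
    ext h
    simp only [Set.mem_setOf_eq, Set.mem_image, Set.mem_preimage, Set.mem_singleton_iff]
    constructor
    · rintro ⟨hdeg, hiv⟩
      refine ⟨⟨h, Polynomial.mem_degreeLT.mpr hdeg⟩, ?_, rfl⟩
      have h1 := (interval_iff w d hdw p h r).mp hiv
      exact (ht _).mp h1
    · rintro ⟨x, hx, rfl⟩
      refine ⟨Polynomial.mem_degreeLT.mp x.2, ?_⟩
      apply (interval_iff w d hdw p x r).mpr
      exact (ht _).mpr hx
  rw [hset, Set.ncard_image_of_injective _ Subtype.val_injective,
    ← Nat.card_coe_set_eq]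
  have hcf := card_fiber (coeffMap p m d) hsurj t
  have hcB : Nat.card (Fin d → ZMod 2) = 2 ^ d := by simp [Nat.card_eq_fintype_card]
  rw [hcB, card_degreeLT] at hcf
  have h2 : 2 ^ (m - d) * 2 ^ d = 2 ^ m := by
    rw [← pow_add]
    congr 1
    omega
  exact Nat.eq_of_mul_eq_mul_right (by positivity) (hcf.trans h2.symm)
end

section
/- Let p ∈ 𝔽₂[x] have degree m ≥ 1, written p = Σ_{k=0}^m p_k x^k with p_k ∈ 𝔽₂, and let h ∈ 𝔽₂[x] with deg h < m. Then the Laurent expansion coefficient sequence of h/p satisfies the linear recurrence with characteristic polynomial p: for every j ≥ 0, Σ_{k=0}^m p_k·c_{j+k}(h) = 0. -/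
/-!
Clearing the denominator, `f := reflect (m-1) h / reverse p` satisfies `reverse p * f = reflect (m-1) h`.
For `n ≥ m` the `n`-th coefficient of `reverse p * f` is exactly `Σ_k p_k f_{n-m+k}`, while the
polynomial `reflect (m-1) h` has degree `< m`, so these coefficients vanish.
-/

open Polynomial

namespace Polynomial

open Finset

theorem coeff_coe_reverse_mul_add_natDegree {R : Type*} [Semiring R] (p : R[X])
    (f : PowerSeries R) (j : ℕ) :
    PowerSeries.coeff (j + p.natDegree) ((p.reverse : PowerSeries R) * f) =
      ∑ k ∈ range (p.natDegree + 1), p.coeff k * PowerSeries.coeff (j + k) f := by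
  set m := p.natDegree
  have high_vanish : ∀ i ∈ range (j + m + 1), i ∉ range (m + 1) →
      coeff p.reverse i * PowerSeries.coeff (j + m - i) f = 0 := by
    intro i _ hi
    rw [coeff_eq_zero_of_natDegree_lt ((reverse_natDegree_le p).trans_lt
      (by simpa using hi)), zero_mul]
  rw [PowerSeries.coeff_mul, Nat.sum_antidiagonal_eq_sum_range_succ_mk]
  simp only [coeff_coe]
  rw [← sum_subset (range_subset_range.mpr (by omega)) high_vanish, ← sum_range_reflect]
  refine sum_congr rfl fun k hk => ?_
  have hk : k ≤ m := Nat.lt_succ_iff.mp (mem_range.mp hk)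
  rw [coeff_reverse, revAt_le (by omega), show m + 1 - 1 - k = m - k by omega,
    show m - (m - k) = k by omega, show j + m - (m - k) = j + k by omega]

theorem constantCoeff_coe_reverse_ne_zero {K : Type*} [Field K] {p : K[X]} (hp : p ≠ 0) :
    PowerSeries.constantCoeff (p.reverse : PowerSeries K) ≠ 0 := by
  rwa [constantCoeff_coe, coeff_zero_reverse, leadingCoeff_ne_zero]

theorem sum_coeff_mul_coeff_div_reverse {K : Type*} [Field K] {p : K[X]} (hp : p ≠ 0)
    (g : PowerSeries K) (j : ℕ) :
    ∑ k ∈ range (p.natDegree + 1),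
        p.coeff k * PowerSeries.coeff (j + k) (g * (p.reverse : PowerSeries K)⁻¹) =
      PowerSeries.coeff (j + p.natDegree) g := by
  rw [← coeff_coe_reverse_mul_add_natDegree, mul_left_comm,
    PowerSeries.mul_inv_cancel _ (constantCoeff_coe_reverse_ne_zero hp), mul_one]

theorem coeff_reflect_eq_zero {R : Type*} [Semiring R] {f : R[X]} {N n : ℕ} (hN : N < n)
    (hf : f.degree < n) : (f.reflect N).coeff n = 0 := by
  rw [coeff_reflect, revAt_eq_self_of_lt hN, coeff_eq_zero_of_degree_lt hf]

end Polynomial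

/-- The Laurent coefficient stream of `h / p` satisfies the linear recurrence
with characteristic polynomial `p = Σ_{k≤m} p_k x^k`:
`Σ_{k=0}^{m} p_k · c_{j+k}(h) = 0` for every `j ≥ 0`. -/
theorem laurentCoeff_linear_recurrence (m : ℕ) (hm : 1 ≤ m)
    (p : Polynomial (ZMod 2)) (hp : p.degree = (m : WithBot ℕ))
    (h : Polynomial (ZMod 2)) (hh : h.degree < (m : WithBot ℕ)) :
    ∀ j : ℕ, ∑ k ∈ Finset.range (m + 1), p.coeff k * laurentCoeff p h (j + k) = 0 := by
  intro j
  have hpm : p.natDegree = m := natDegree_eq_of_degree_eq_some hp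
  have hp0 : p ≠ 0 := ne_zero_of_natDegree_gt (n := 0) (by omega)
  have hh' : h.degree < ↑(j + m) := hh.trans_le (by exact_mod_cast Nat.le_add_left m j)
  calc ∑ k ∈ Finset.range (m + 1), p.coeff k * laurentCoeff p h (j + k)
      = PowerSeries.coeff (j + m) (h.reflect (p.natDegree - 1) : PowerSeries (ZMod 2)) := by
        rw [← hpm]; exact sum_coeff_mul_coeff_div_reverse hp0 _ j
    _ = 0 := by rw [Polynomial.coeff_coe, coeff_reflect_eq_zero (by omega) hh']
end
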